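/- Let $E \subset \mathbb{R}^N$, $x \in E$, $r > 0$, and suppose $y \in E \cap \overline{B}(x, r)$ satisfies $|y - x| \geq 64\, \beta_E(\overline{B}(x,r))\, r$. Let $\ell_{x,y}$ be the line through $x$ and $y$. Then every $z \in E \cap \overline{B}(x, r)$ satisfies $\operatorname{dist}(z, \ell_{x,y}) \leq 4\, \beta_E(\overline{B}(x,r)) \left(1 + \frac{1.1\, r}{|y - x|}\right) r$. -/

import Mathlib

open Metric RealInnerProductSpace

lemma line_nonempty' {X : Type*} [NormedAddCommGroup X] [Module ℝ X] (p u : X) :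
    Set.Nonempty {y | ∃ t : ℝ, y = p + t • u} := ⟨p, 0, by simp⟩

lemma proj_orth' {X : Type*} [NormedAddCommGroup X] [InnerProductSpace ℝ X]
    (p u w : X) (hu : u ≠ 0) :
    ⟪w - (p + ((⟪w - p, u⟫) / ‖u‖ ^ 2) • u), u⟫ = 0 := by
  have hu2 : ‖u‖ ^ 2 ≠ 0 := pow_ne_zero 2 (norm_ne_zero_iff.2 hu)
  simp only [inner_sub_left, inner_add_left, real_inner_smul_left,
    real_inner_self_eq_norm_sq]
  field_simp
  ring

lemma dist_proj_le_infDist' {X : Type*} [NormedAddCommGroup X] [InnerProductSpace ℝ X]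
    (p u w : X) (hu : u ≠ 0) :
    dist w (p + ((⟪w - p, u⟫) / ‖u‖ ^ 2) • u) ≤
      Metric.infDist w {y | ∃ t : ℝ, y = p + t • u} := by
  set c : ℝ := ⟪w - p, u⟫ / ‖u‖ ^ 2 with hc
  have horth := proj_orth' p u w hu
  rw [← hc] at horth
  by_contra hlt
  push_neg at hlt
  obtain ⟨a, ⟨t, rfl⟩, hd⟩ := (Metric.infDist_lt_iff (line_nonempty' p u)).1 hlt
  have hid : w - (p + t • u) = (w - (p + c • u)) + (c - t) • u := by module
  have hperp : ⟪w - (p + c • u), (c - t) • u⟫ = 0 := by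
    rw [real_inner_smul_right, horth]; ring
  have hsq := norm_add_sq_real (w - (p + c • u)) ((c - t) • u)
  rw [hperp] at hsq
  rw [dist_eq_norm, dist_eq_norm, hid] at hd
  nlinarith [norm_nonneg ((c - t) • u), norm_nonneg (w - (p + c • u)),
    norm_nonneg (w - (p + c • u) + (c - t) • u)]


/-- Jones beta number of `E` in the closed ball `B̄(x,r)`, normalized by `2r`:
the least `b ≥ 0` such that some line approximates `E ∩ B̄(x,r)` within `b · 2r`. -/
noncomputable def betaBall {N : ℕ} (E : Set (EuclideanSpace ℝ (Fin N)))
    (x : EuclideanSpace ℝ (Fin N)) (r : ℝ) : ℝ :=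
  sInf {b : ℝ | 0 ≤ b ∧ ∃ p u : EuclideanSpace ℝ (Fin N),
    ∀ w ∈ E ∩ Metric.closedBall x r,
      Metric.infDist w {y | ∃ t : ℝ, y = p + t • u} ≤ b * (2 * r)}

set_option maxHeartbeats 1000000

/-- Lemma 8.5: if `y ∈ E ∩ B̄(x,r)` is well separated from `x` relative to the flatness
`β_E(B̄(x,r))`, then every point of `E ∩ B̄(x,r)` is close to the line through `x` and `y`. -/
theorem dist_to_secant_line_le {N : ℕ} (E : Set (EuclideanSpace ℝ (Fin N)))
    (x y : EuclideanSpace ℝ (Fin N)) (r : ℝ) (hr : 0 < r) (hx : x ∈ E)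
    (hy : y ∈ E ∩ Metric.closedBall x r) (hxy : x ≠ y)
    (hfar : 64 * betaBall E x r * r ≤ dist y x) :
    ∀ z ∈ E ∩ Metric.closedBall x r,
      Metric.infDist z {w | ∃ t : ℝ, w = x + t • (y - x)} ≤
        4 * betaBall E x r * (1 + 1.1 * r / dist y x) * r := by
  intro z hz
  classical
  set S : Set ℝ := {b : ℝ | 0 ≤ b ∧ ∃ p u : EuclideanSpace ℝ (Fin N),
    ∀ w ∈ E ∩ Metric.closedBall x r,
      Metric.infDist w {y | ∃ t : ℝ, y = p + t • u} ≤ b * (2 * r)} with hS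
  set β := betaBall E x r with hβ
  have hβS : β = sInf S := rfl
  have hSne : S.Nonempty := by
    refine ⟨1/2, by norm_num, x, 0, fun w hw => ?_⟩
    have hx0 : x ∈ {y : EuclideanSpace ℝ (Fin N) |
        ∃ t : ℝ, y = x + t • (0 : EuclideanSpace ℝ (Fin N))} := ⟨0, by simp⟩
    calc Metric.infDist w _ ≤ dist w x := Metric.infDist_le_dist_of_mem hx0
      _ ≤ r := hw.2
      _ = 1/2 * (2*r) := by ring
  have hSbdd : BddBelow S := ⟨0, fun b hb => hb.1⟩
  have hβ0 : 0 ≤ β := by rw [hβS]; exact le_csInf hSne (fun b hb => hb.1)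
  set D := dist y x with hDdef
  have hD0 : 0 < D := dist_pos.mpr (Ne.symm hxy)
  have hDr : D ≤ r := hy.2
  have hβD : 64 * β * r ≤ D := hfar
  have hzr : dist z x ≤ r := hz.2
  set c : ℝ := 1.1 * r / D with hc
  have hc1 : (1:ℝ) ≤ c := by
    rw [hc, le_div_iff₀ hD0]; linarith only [hDr, hr]
  have hcD : c * D = 1.1 * r := by
    rw [hc]; field_simp
  refine le_of_forall_pos_le_add ?_
  intro ε hε
  set η := min (ε * D / (9 * r^2)) (D / (13 * r)) with hηdef
  have hη0 : 0 < η := lt_min (by positivity) (by positivity)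
  have hη1 : η * (9 * r^2) ≤ ε * D := by
    have := min_le_left (ε * D / (9 * r^2)) (D / (13 * r))
    rw [← hηdef] at this
    calc η * (9 * r^2) ≤ (ε * D / (9 * r^2)) * (9 * r^2) :=
          mul_le_mul_of_nonneg_right this (by positivity)
      _ = ε * D := by field_simp
  have hη2 : η * (13 * r) ≤ D := by
    have h := min_le_right (ε * D / (9 * r^2)) (D / (13 * r))
    rw [← hηdef] at h
    calc η * (13 * r) ≤ (D / (13 * r)) * (13 * r) :=
          mul_le_mul_of_nonneg_right h (by positivity)
      _ = D := by field_simp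
  obtain ⟨b, hbS, hblt⟩ : ∃ b ∈ S, b < β + η := by
    apply (csInf_lt_iff hSbdd hSne).1
    rw [← hβS]; linarith
  obtain ⟨hb0, p, u₀, hu₀⟩ := hbS
  obtain ⟨u, hu0, hu⟩ : ∃ u : EuclideanSpace ℝ (Fin N), u ≠ 0 ∧
      ∀ w ∈ E ∩ Metric.closedBall x r,
        Metric.infDist w {a | ∃ t : ℝ, a = p + t • u} ≤ b * (2*r) := by
    by_cases h0 : u₀ = 0
    · refine ⟨y - x, sub_ne_zero.2 (Ne.symm hxy), fun w hw => ?_⟩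
      have h2 := hu₀ w hw
      subst h0
      have hset : {a : EuclideanSpace ℝ (Fin N) |
          ∃ t : ℝ, a = p + t • (0 : EuclideanSpace ℝ (Fin N))} = {p} := by
        ext a; simp
      rw [hset, Metric.infDist_singleton] at h2
      have hp : p ∈ {a : EuclideanSpace ℝ (Fin N) | ∃ t : ℝ, a = p + t • (y - x)} :=
        ⟨0, by simp⟩
      calc Metric.infDist w _ ≤ dist w p := Metric.infDist_le_dist_of_mem hp
        _ ≤ b * (2*r) := h2
    · exact ⟨u₀, h0, hu₀⟩
  set d := 2*(β+η)*r with hddef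
  have hd0 : 0 < d := by
    rw [hddef]
    have h := mul_pos (show (0:ℝ) < β + η by linarith only [hβ0, hη0]) hr
    linarith only [h]
  have hbd : b * (2*r) ≤ d := by
    rw [hddef]
    have h := mul_le_mul_of_nonneg_right hblt.le (show (0:ℝ) ≤ 2*r by linarith only [hr])
    linarith only [h]
  have hinf : ∀ w ∈ E ∩ Metric.closedBall x r,
      Metric.infDist w {a | ∃ t : ℝ, a = p + t • u} ≤ d :=
    fun w hw => le_trans (hu w hw) hbd
  have hd5 : 5 * d ≤ D := by rw [hddef]; linarith only [hβD, hη2, hD0]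
  clear_value S β D c η d
  have hnu0 : (0:ℝ) < ‖u‖ ^ 2 := pow_pos (norm_pos_iff.mpr hu0) 2
  obtain ⟨tx, htx⟩ : ∃ t : ℝ, t = ⟪x - p, u⟫ / ‖u‖ ^ 2 := ⟨_, rfl⟩
  obtain ⟨ty, hty⟩ : ∃ t : ℝ, t = ⟪y - p, u⟫ / ‖u‖ ^ 2 := ⟨_, rfl⟩
  obtain ⟨tz, htz⟩ : ∃ t : ℝ, t = ⟪z - p, u⟫ / ‖u‖ ^ 2 := ⟨_, rfl⟩
  obtain ⟨qx, hqx⟩ : ∃ q : EuclideanSpace ℝ (Fin N), q = p + tx • u := ⟨_, rfl⟩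
  obtain ⟨qy, hqy⟩ : ∃ q : EuclideanSpace ℝ (Fin N), q = p + ty • u := ⟨_, rfl⟩
  obtain ⟨qz, hqz⟩ : ∃ q : EuclideanSpace ℝ (Fin N), q = p + tz • u := ⟨_, rfl⟩
  -- distances to projections
  have hxq : ‖x - qx‖ ≤ d := by
    have h := dist_proj_le_infDist' p u x hu0
    rw [← htx, ← hqx, dist_eq_norm] at h
    exact le_trans h (hinf x ⟨hx, Metric.mem_closedBall_self hr.le⟩)
  have hyq : ‖y - qy‖ ≤ d := by
    have h := dist_proj_le_infDist' p u y hu0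
    rw [← hty, ← hqy, dist_eq_norm] at h
    exact le_trans h (hinf y hy)
  have hzq : ‖z - qz‖ ≤ d := by
    have h := dist_proj_le_infDist' p u z hu0
    rw [← htz, ← hqz, dist_eq_norm] at h
    exact le_trans h (hinf z hz)
  -- orthogonality
  have hox : ⟪x - qx, u⟫ = 0 := by
    have h := proj_orth' p u x hu0; rw [← htx, ← hqx] at h; exact h
  have hoy : ⟪y - qy, u⟫ = 0 := by
    have h := proj_orth' p u y hu0; rw [← hty, ← hqy] at h; exact h
  have hoz : ⟪z - qz, u⟫ = 0 := by
    have h := proj_orth' p u z hu0; rw [← htz, ← hqz] at h; exact h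
  -- Pythagoras for y - x
  have hyx_id : y - x = (ty - tx) • u + ((y - qy) - (x - qx)) := by
    rw [hqy, hqx]; module
  have hoy' : ⟪u, y - qy⟫ = 0 := by rw [real_inner_comm]; exact hoy
  have hox' : ⟪u, x - qx⟫ = 0 := by rw [real_inner_comm]; exact hox
  have hperpU : ⟪(ty - tx) • u, (y - qy) - (x - qx)⟫ = 0 := by
    rw [real_inner_smul_left, inner_sub_right, hoy', hox']; ring
  have hperpn : ‖(y - qy) - (x - qx)‖ ≤ 2 * d :=
    le_trans (norm_sub_le _ _) (by linarith)
  have hPy : D ^ 2 = (ty - tx) ^ 2 * ‖u‖ ^ 2 + ‖(y - qy) - (x - qx)‖ ^ 2 := by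
    have h := norm_add_sq_real ((ty - tx) • u) ((y - qy) - (x - qx))
    rw [hperpU, ← hyx_id] at h
    have hD : D = ‖y - x‖ := by rw [hDdef]; exact dist_eq_norm y x
    rw [hD, h, norm_smul, Real.norm_eq_abs, mul_pow, sq_abs]
    ring
  obtain ⟨e, he⟩ : ∃ t : ℝ, t = |ty - tx| * ‖u‖ := ⟨_, rfl⟩
  have he2 : e ^ 2 = (ty - tx) ^ 2 * ‖u‖ ^ 2 := by
    rw [he, mul_pow, sq_abs]
  have he0 : 0 ≤ e := by rw [he]; positivity
  have heD : D / 1.1 ≤ e := by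
    have hp2 : ‖(y - qy) - (x - qx)‖ ^ 2 ≤ 4 * d ^ 2 := by
      have h := pow_le_pow_left₀ (norm_nonneg ((y - qy) - (x - qx))) hperpn 2
      calc ‖(y - qy) - (x - qx)‖ ^ 2 ≤ (2*d) ^ 2 := h
        _ = 4 * d ^ 2 := by ring
    have hd2 : 25 * d ^ 2 ≤ D ^ 2 := by
      have h := pow_le_pow_left₀ (show (0:ℝ) ≤ 5*d by linarith only [hd0]) hd5 2
      calc 25 * d ^ 2 = (5*d) ^ 2 := by ring
        _ ≤ D ^ 2 := h
    have hDD : (D / 1.1) ^ 2 = (100/121) * D ^ 2 := by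
      rw [div_pow]; norm_num; ring
    have hPy' : D ^ 2 = e ^ 2 + ‖(y - qy) - (x - qx)‖ ^ 2 := by
      rw [he2]; exact hPy
    have hesq : (D / 1.1) ^ 2 ≤ e ^ 2 := by
      linarith only [hPy', hp2, hd2, hDD, sq_nonneg D]
    have := Real.sqrt_le_sqrt hesq
    rw [Real.sqrt_sq (by positivity), Real.sqrt_sq he0] at this
    exact this
  have heB : ty - tx ≠ 0 := by
    intro h
    have he0' : e = 0 := by rw [he, h]; simp
    rw [he0'] at heD
    have hpos : (0:ℝ) < D / 1.1 := by positivity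
    linarith
  -- tangential component of z - x
  have hzx_id : z - x = (tz - tx) • u + ((z - qz) - (x - qx)) := by
    rw [hqz, hqx]; module
  have hA5 : ⟪z - x, u⟫ = (tz - tx) * ‖u‖ ^ 2 := by
    rw [hzx_id, inner_add_left, real_inner_smul_left, inner_sub_left, hoz, hox,
      real_inner_self_eq_norm_sq]
    ring
  obtain ⟨a, ha⟩ : ∃ t : ℝ, t = |tz - tx| * ‖u‖ := ⟨_, rfl⟩
  have haR : a ≤ r := by
    have h1 : |⟪z - x, u⟫| ≤ ‖z - x‖ * ‖u‖ := abs_real_inner_le_norm _ _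
    rw [hA5, abs_mul, abs_of_nonneg (le_of_lt hnu0)] at h1
    have h2 : ‖z - x‖ ≤ r := by rw [← dist_eq_norm]; exact hzr
    have hu' : 0 < ‖u‖ := norm_pos_iff.2 hu0
    have : a * ‖u‖ ≤ r * ‖u‖ := by
      rw [ha]
      calc |tz - tx| * ‖u‖ * ‖u‖ = |tz - tx| * ‖u‖ ^ 2 := by ring
        _ ≤ ‖z - x‖ * ‖u‖ := h1
        _ ≤ r * ‖u‖ := mul_le_mul_of_nonneg_right h2 (norm_nonneg u)
    exact le_of_mul_le_mul_right this hu'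
  -- the parameter
  obtain ⟨τ, hτdef⟩ : ∃ t : ℝ, t = (tz - tx) / (ty - tx) := ⟨_, rfl⟩
  have hτabs : |τ| = a / e := by
    rw [hτdef, abs_div, ha, he]
    rw [mul_div_mul_right _ _ (norm_ne_zero_iff.2 hu0)]
  have hτc : |τ| ≤ c := by
    rw [hτabs]
    have h11 : (0:ℝ) < D / 1.1 := by positivity
    calc a / e ≤ r / (D / 1.1) := div_le_div₀ hr.le haR h11 heD
      _ = c := by rw [hc]; field_simp
  -- the key identity
  have hcon : τ * (ty - tx) = tz - tx := by
    rw [hτdef]; exact div_mul_cancel₀ _ heB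
  have hid7 : z - (x + τ • (y - x)) =
      (z - qz) + (1 - τ) • (qx - x) + (-τ) • (y - qy) := by
    rw [hqz, hqx, hqy]
    match_scalars
    all_goals try ring
    all_goals first
      | linear_combination hcon
      | linear_combination -hcon
  -- norm bound
  have h1τ : |1 - τ| ≤ 1 + |τ| := by
    calc |1 - τ| = |1 + (-τ)| := by ring_nf
      _ ≤ |(1:ℝ)| + |(-τ)| := abs_add_le _ _
      _ = 1 + |τ| := by simp
  have hnorm : ‖z - (x + τ • (y - x))‖ ≤ 2 * d + 2 * c * d := by
    have habs0 : (0:ℝ) ≤ |τ| := abs_nonneg _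
    calc ‖z - (x + τ • (y - x))‖
        = ‖(z - qz) + (1 - τ) • (qx - x) + (-τ) • (y - qy)‖ := by rw [hid7]
      _ ≤ ‖(z - qz) + (1 - τ) • (qx - x)‖ + ‖(-τ) • (y - qy)‖ := norm_add_le _ _
      _ ≤ ‖z - qz‖ + ‖(1 - τ) • (qx - x)‖ + ‖(-τ) • (y - qy)‖ := by
          linarith only [norm_add_le (z - qz) ((1 - τ) • (qx - x))]
      _ = ‖z - qz‖ + |1 - τ| * ‖qx - x‖ + |τ| * ‖y - qy‖ := by
          rw [norm_smul, norm_smul, Real.norm_eq_abs, Real.norm_eq_abs, abs_neg]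
      _ ≤ d + (1 + |τ|) * d + |τ| * d := by
          have hqxx : ‖qx - x‖ ≤ d := by rw [norm_sub_rev]; exact hxq
          have t1 : |1 - τ| * ‖qx - x‖ ≤ (1 + |τ|) * d :=
            mul_le_mul h1τ hqxx (norm_nonneg _) (by positivity)
          have t2 : |τ| * ‖y - qy‖ ≤ |τ| * d :=
            mul_le_mul_of_nonneg_left hyq (abs_nonneg τ)
          linarith only [hzq, t1, t2]
      _ = 2 * d + 2 * |τ| * d := by ring
      _ ≤ 2 * d + 2 * c * d := by
          have h := mul_le_mul_of_nonneg_right hτc hd0.le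
          linarith only [h]
  -- conclude
  have hmem : x + τ • (y - x) ∈ {w : EuclideanSpace ℝ (Fin N) |
      ∃ t : ℝ, w = x + t • (y - x)} := ⟨τ, rfl⟩
  calc Metric.infDist z {w | ∃ t : ℝ, w = x + t • (y - x)}
      ≤ dist z (x + τ • (y - x)) := Metric.infDist_le_dist_of_mem hmem
    _ = ‖z - (x + τ • (y - x))‖ := dist_eq_norm _ _
    _ ≤ 2 * d + 2 * c * d := hnorm
    _ ≤ 4 * β * (1 + c) * r + ε := by
        have h1 : 4 * η * r + 4 * η * r * c ≤ 8 * η * r * c := by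
          have h := mul_le_mul_of_nonneg_left hc1 (show (0:ℝ) ≤ 4*η*r by positivity)
          linarith only [h]
        have h2 : 8 * η * r * c * D = 8.8 * η * r ^ 2 := by
          calc 8 * η * r * c * D = 8 * η * r * (c * D) := by ring
            _ = 8 * η * r * (1.1 * r) := by rw [hcD]
            _ = 8.8 * η * r ^ 2 := by ring
        have h3 : 8 * η * r * c ≤ ε := by
          rw [← mul_le_mul_iff_of_pos_right hD0, h2]
          have h := mul_pos hη0 (mul_pos hr hr)
          linarith only [hη1, h]
        have hkey : 4 * η * r + 4 * η * r * c ≤ ε := by linarith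
        rw [hddef]
        linarith only [hkey]
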